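/- Relaxed structural lemma under local regularity: let F be twice continuously differentiable on open convex D ⊇ X, with x* ∈ X satisfying ⟨∇F(x*), z − x*⟩ ≥ 0 for z ∈ X. Let H : D → Sym(p) satisfy ‖H(u) − H(x*)‖ ≤ Γ‖u − x*‖, λ_min(H(x*)) = μ* > 0, and assume ∇²F is L-Lipschitz along the segment [x*, x]. If x satisfies ‖x − x*‖ ≤ μ*/(2Γ) and x⁺ = argmin over X of ⟨∇F(x), z − x⟩ + ½(z − x)ᵀ H(x)(z − x), then ‖x⁺ − x*‖ ≤ (2‖H(x*) − ∇²F(x*)‖/μ*)·‖x − x*‖ + ((2Γ + L)/μ*)·‖x − x*‖². -/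

import Mathlib

open scoped RealInnerProductSpace

open Set

/-! The two variational inequalities, tested at `x⁺` and at `x*`, give
`⟪H(x) e, e⟫ ≤ ⟪∇F(x*) - ∇F(x) + H(x) d, e⟫` with `d = x - x*` and `e = x⁺ - x*`.
Near `x*` the scaling `H(x)` is `μ*/2`-coercive, so `‖e‖` is at most `2/μ*` times the residual
`∇F(x*) - ∇F(x) + H(x) d = (H(x) - H(x*)) d + (H(x*) - ∇²F(x*)) d - (∇F(x) - ∇F(x*) - ∇²F(x*) d)`,
whose last term is the second-order Taylor remainder of the gradient, bounded by `L/2 ‖d‖²`. -/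

theorem norm_sub_sub_fderiv_le_of_lipschitz_on_segment
    {E F : Type*} [NormedAddCommGroup E] [NormedSpace ℝ E]
    [NormedAddCommGroup F] [NormedSpace ℝ F]
    {f : E → F} {f' : E → E →L[ℝ] F} {a b : E} {L : ℝ}
    (hf : ∀ u ∈ segment ℝ a b, HasFDerivAt f (f' u) u)
    (hlip : ∀ u ∈ segment ℝ a b, ‖f' u - f' a‖ ≤ L * ‖u - a‖) :
    ‖f b - f a - f' a (b - a)‖ ≤ L / 2 * ‖b - a‖ ^ 2 := by
  set d := b - a
  let γ : ℝ → E := fun t => a + t • d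
  have hγ_mem : ∀ t ∈ Icc (0 : ℝ) 1, γ t ∈ segment ℝ a b := fun t ht => by
    rw [segment_eq_image']; exact ⟨t, ht, rfl⟩
  let g : ℝ → F := fun t => f (γ t) - f a - t • f' a d
  have hg : ∀ t ∈ Icc (0 : ℝ) 1, HasDerivAt g (f' (γ t) d - f' a d) t := fun t ht => by
    have hγ' : HasDerivAt γ d t := by
      simpa only [one_smul] using ((hasDerivAt_id' t).smul_const d).const_add a
    have hlin : HasDerivAt (fun t : ℝ => t • f' a d) (f' a d) t := by
      simpa using (hasDerivAt_id t).smul_const (f' a d)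
    exact (((hf _ (hγ_mem t ht)).comp_hasDerivAt t hγ').sub_const (f a)).sub hlin
  have hbound : ∀ t ∈ Icc (0 : ℝ) 1, ‖g t‖ ≤ L / 2 * ‖d‖ ^ 2 * t ^ 2 := by
    refine image_norm_le_of_norm_deriv_right_le_deriv_boundary
      (fun t ht => (hg t ht).continuousAt.continuousWithinAt)
      (fun t ht => (hg t (Ico_subset_Icc_self ht)).hasDerivWithinAt)
      (B := fun t => L / 2 * ‖d‖ ^ 2 * t ^ 2) (B' := fun t => L * ‖d‖ ^ 2 * t)
      (by simp [g, γ]) (fun t => ?_) (fun t ht => ?_)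
    · exact ((hasDerivAt_pow 2 t).const_mul _).congr_deriv (by norm_num; ring)
    · have hdist : ‖γ t - a‖ = t * ‖d‖ := by
        simp [γ, norm_smul, abs_of_nonneg ht.1]
      calc ‖f' (γ t) d - f' a d‖ = ‖(f' (γ t) - f' a) d‖ := rfl
        _ ≤ ‖f' (γ t) - f' a‖ * ‖d‖ := (f' (γ t) - f' a).le_opNorm d
        _ ≤ L * ‖γ t - a‖ * ‖d‖ := by
          gcongr
          exact hlip _ (hγ_mem t (Ico_subset_Icc_self ht))
        _ = L * ‖d‖ ^ 2 * t := by rw [hdist]; ring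
  simpa [g, γ, d] using hbound 1 (right_mem_Icc.2 zero_le_one)

theorem norm_sub_add_apply_le {E F : Type*} [SeminormedAddCommGroup E] [NormedSpace ℝ E]
    [SeminormedAddCommGroup F] [NormedSpace ℝ F] (g₀ g₁ : F) (T S A : E →L[ℝ] F) (d : E) :
    ‖g₀ - g₁ + T d‖ ≤ ‖S - A‖ * ‖d‖ + ‖T - S‖ * ‖d‖ + ‖g₁ - g₀ - A d‖ := by
  have hsplit : g₀ - g₁ + T d = (S - A) d + (T - S) d - (g₁ - g₀ - A d) := by
    simp only [sub_apply]; abel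
  rw [hsplit]
  refine (norm_sub_le _ _).trans (add_le_add_left ((norm_add_le _ _).trans ?_) _)
  exact add_le_add ((S - A).le_opNorm d) ((T - S).le_opNorm d)

section InnerProductSpace

variable {E : Type*} [NormedAddCommGroup E] [InnerProductSpace ℝ E]

theorem ContinuousLinearMap.sub_mul_sq_norm_le_inner_map_self {S T : E →L[ℝ] E} {μ δ : ℝ}
    (hS : ∀ v, μ * ‖v‖ ^ 2 ≤ ⟪v, S v⟫) (hTS : ‖T - S‖ ≤ δ) (v : E) :
    (μ - δ) * ‖v‖ ^ 2 ≤ ⟪v, T v⟫ := by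
  have hdiff : |⟪v, (T - S) v⟫| ≤ δ * ‖v‖ ^ 2 :=
    calc |⟪v, (T - S) v⟫| ≤ ‖v‖ * ‖(T - S) v‖ := abs_real_inner_le_norm _ _
      _ ≤ ‖v‖ * (‖T - S‖ * ‖v‖) := by gcongr; exact (T - S).le_opNorm v
      _ ≤ δ * ‖v‖ ^ 2 := by nlinarith [norm_nonneg v]
  have hsplit : ⟪v, T v⟫ = ⟪v, S v⟫ + ⟪v, (T - S) v⟫ := by
    simp [inner_sub_right]
  linarith [hS v, (abs_le.1 hdiff).1]

theorem norm_sub_le_of_variational_inequalities {X : Set E} {g g' : E} {H : E →L[ℝ] E}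
    {xstar x xplus : E} {m : ℝ} (hm : 0 < m) (hH : ∀ v, m * ‖v‖ ^ 2 ≤ ⟪v, H v⟫)
    (hxstar : xstar ∈ X) (hxplus : xplus ∈ X)
    (hVIstar : ∀ z ∈ X, 0 ≤ ⟪g, z - xstar⟫)
    (hVI : ∀ z ∈ X, 0 ≤ ⟪g' + H (xplus - x), z - xplus⟫) :
    ‖xplus - xstar‖ ≤ ‖g - g' + H (x - xstar)‖ / m := by
  set e := xplus - xstar
  have hstep : H (xplus - x) = H e - H (x - xstar) := by
    rw [← map_sub, sub_sub_sub_cancel_right]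
  have hVIe : ⟪g' + H (xplus - x), e⟫ ≤ 0 := by
    have := hVI xstar hxstar
    rw [show xstar - xplus = -e from (neg_sub _ _).symm, inner_neg_right] at this
    linarith
  have hcoercive : m * ‖e‖ ^ 2 ≤ ‖g - g' + H (x - xstar)‖ * ‖e‖ :=
    calc m * ‖e‖ ^ 2 ≤ ⟪e, H e⟫ := hH e
      _ = ⟪H e, e⟫ := real_inner_comm _ _
      _ ≤ ⟪g - g' + H (x - xstar), e⟫ := by
        have := hVIstar xplus hxplus
        rw [hstep] at hVIe
        simp only [inner_add_left, inner_sub_left] at hVIe ⊢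
        linarith
      _ ≤ ‖g - g' + H (x - xstar)‖ * ‖e‖ := real_inner_le_norm _ _
  rcases (norm_nonneg e).eq_or_lt with he | he
  · rw [← he]; positivity
  · rw [le_div_iff₀ hm]; nlinarith

end InnerProductSpace

theorem structural_error_recursion_local_regularity_general {p : ℕ}
    (D X : Set (EuclideanSpace ℝ (Fin p)))
    (hDconv : Convex ℝ D) (hXD : X ⊆ D)
    (gradF : EuclideanSpace ℝ (Fin p) → EuclideanSpace ℝ (Fin p))
    (hessF : EuclideanSpace ℝ (Fin p) →
      (EuclideanSpace ℝ (Fin p) →L[ℝ] EuclideanSpace ℝ (Fin p)))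
    (hhess : ∀ u ∈ D, HasFDerivAt gradF (hessF u) u)
    (xstar x xplus : EuclideanSpace ℝ (Fin p))
    (hxstarX : xstar ∈ X) (hxX : x ∈ X) (hxplusX : xplus ∈ X)
    (hVIstar : ∀ z ∈ X, 0 ≤ ⟪gradF xstar, z - xstar⟫)
    (L Γ μs : ℝ) (hΓ : 0 < Γ) (hμs : 0 < μs)
    (hlip : ∀ u ∈ segment ℝ xstar x, ∀ v ∈ segment ℝ xstar x,
      ‖hessF u - hessF v‖ ≤ L * ‖u - v‖)
    (Hmap : EuclideanSpace ℝ (Fin p) →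
      (EuclideanSpace ℝ (Fin p) →L[ℝ] EuclideanSpace ℝ (Fin p)))
    (hHlip : ∀ u ∈ D, ‖Hmap u - Hmap xstar‖ ≤ Γ * ‖u - xstar‖)
    (hHmin : ∀ v, μs * ‖v‖ ^ 2 ≤ ⟪v, Hmap xstar v⟫)
    (hclose : ‖x - xstar‖ ≤ μs / (2 * Γ))
    (hVI : ∀ z ∈ X, 0 ≤ ⟪gradF x + Hmap x (xplus - x), z - xplus⟫) :
    ‖xplus - xstar‖ ≤
      (2 * ‖Hmap xstar - hessF xstar‖ / μs) * ‖x - xstar‖ +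
      ((2 * Γ + L) / μs) * ‖x - xstar‖ ^ 2 := by
  have hxD : x ∈ D := hXD hxX
  have hHx : ‖Hmap x - Hmap xstar‖ ≤ μs / 2 := by
    refine (hHlip x hxD).trans ?_
    rw [le_div_iff₀ (by positivity)] at hclose
    linarith
  have hcoercive : ∀ v, μs / 2 * ‖v‖ ^ 2 ≤ ⟪v, Hmap x v⟫ := fun v =>
    (ContinuousLinearMap.sub_mul_sq_norm_le_inner_map_self hHmin hHx v).trans_eq' (by ring)
  have htaylor := norm_sub_sub_fderiv_le_of_lipschitz_on_segment
    (fun u hu => hhess u (hDconv.segment_subset (hXD hxstarX) hxD hu))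
    (fun u hu => hlip u hu xstar (left_mem_segment ℝ xstar x))
  calc ‖xplus - xstar‖
      ≤ ‖gradF xstar - gradF x + Hmap x (x - xstar)‖ / (μs / 2) :=
        norm_sub_le_of_variational_inequalities (half_pos hμs) hcoercive hxstarX hxplusX
          hVIstar hVI
    _ ≤ (‖Hmap xstar - hessF xstar‖ * ‖x - xstar‖ + Γ * ‖x - xstar‖ * ‖x - xstar‖
          + L / 2 * ‖x - xstar‖ ^ 2) / (μs / 2) := by
        gcongr
        refine (norm_sub_add_apply_le _ _ _ (Hmap xstar) (hessF xstar) _).trans ?_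
        gcongr
        exact hHlip x hxD
    _ = _ := by field_simp; ring

/-- Relaxed structural lemma under local regularity: the scaling matrix `H(·)` is
`Γ`-Lipschitz around `x*`, positive definite at `x*` with smallest eigenvalue at least `μ*`,
and the iterate is within `μ*/(2Γ)` of `x*`. -/
theorem structural_error_recursion_local_regularity {p : ℕ}
    (D X : Set (EuclideanSpace ℝ (Fin p)))
    (hD : IsOpen D) (hDconv : Convex ℝ D) (hXconv : Convex ℝ X) (hXD : X ⊆ D)
    (F : EuclideanSpace ℝ (Fin p) → ℝ)
    (gradF : EuclideanSpace ℝ (Fin p) → EuclideanSpace ℝ (Fin p))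
    (hessF : EuclideanSpace ℝ (Fin p) →
      (EuclideanSpace ℝ (Fin p) →L[ℝ] EuclideanSpace ℝ (Fin p)))
    (hgrad : ∀ u ∈ D, HasGradientAt F (gradF u) u)
    (hhess : ∀ u ∈ D, HasFDerivAt gradF (hessF u) u)
    (hhessCont : ContinuousOn hessF D)
    (xstar x xplus : EuclideanSpace ℝ (Fin p))
    (hxstarX : xstar ∈ X) (hxX : x ∈ X) (hxplusX : xplus ∈ X)
    (hVIstar : ∀ z ∈ X, 0 ≤ ⟪gradF xstar, z - xstar⟫)
    (L Γ μs : ℝ) (hL : 0 ≤ L) (hΓ : 0 < Γ) (hμs : 0 < μs)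
    (hlip : ∀ u ∈ segment ℝ xstar x, ∀ v ∈ segment ℝ xstar x,
      ‖hessF u - hessF v‖ ≤ L * ‖u - v‖)
    (Hmap : EuclideanSpace ℝ (Fin p) →
      (EuclideanSpace ℝ (Fin p) →L[ℝ] EuclideanSpace ℝ (Fin p)))
    (hHsym : ∀ u ∈ D, ∀ a b, ⟪Hmap u a, b⟫ = ⟪a, Hmap u b⟫)
    (hHlip : ∀ u ∈ D, ‖Hmap u - Hmap xstar‖ ≤ Γ * ‖u - xstar‖)
    (hHmin : ∀ v, μs * ‖v‖ ^ 2 ≤ ⟪v, Hmap xstar v⟫)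
    (hclose : ‖x - xstar‖ ≤ μs / (2 * Γ))
    (hVI : ∀ z ∈ X, 0 ≤ ⟪gradF x + Hmap x (xplus - x), z - xplus⟫) :
    ‖xplus - xstar‖ ≤
      (2 * ‖Hmap xstar - hessF xstar‖ / μs) * ‖x - xstar‖ +
      ((2 * Γ + L) / μs) * ‖x - xstar‖ ^ 2 :=
  structural_error_recursion_local_regularity_general D X hDconv hXD gradF hessF hhess xstar x xplus
    hxstarX hxX hxplusX hVIstar L Γ μs hΓ hμs hlip Hmap hHlip hHmin hclose hVI
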